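/- For every s ≥ 1, average-case L₂-approximation with Gaussian kernels is EC-(s,1)-weakly tractable if and only if it is EC-weakly tractable, if and only if lim_{j→∞} γ_j² = 0. -/

import Mathlib

open Filter

/-- `omegaOf x` is `ω` for shape parameter squared `x = γ²`:
`ω = 2γ²/(1+2γ²+√(1+4γ²))`. -/
noncomputable def omegaOf (x : ℝ) : ℝ := 2 * x / (1 + 2 * x + Real.sqrt (1 + 4 * x))

/-- Eigenvalues `λ_d(j) = ∏_{k=1}^d (1-ω_k) ω_k^{j_k}`, where `g k = γ_{k+1}²`. -/
noncomputable def eigen (g : ℕ → ℝ) (d : ℕ) (j : Fin d → ℕ) : ℝ :=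
  ∏ k : Fin d, (1 - omegaOf (g (k : ℕ))) * omegaOf (g (k : ℕ)) ^ (j k)

/-- The information complexity `n(ε,d)`: the least `n` such that some finite set `S` of
multi-indices with `|S| ≤ n` satisfies `∑_{j ∉ S} λ_d(j) ≤ ε²`. -/
noncomputable def infoComp (g : ℕ → ℝ) (ε : ℝ) (d : ℕ) : ℕ :=
  sInf {n : ℕ | ∃ S : Finset (Fin d → ℕ), S.card ≤ n ∧
    (∑' j : {j : Fin d → ℕ // j ∉ S}, eigen g d j.1) ≤ ε ^ 2}

/-- EC-`(s,t)`-weak tractability: `lim_{ε⁻¹+d→∞} ln n(ε,d) / ((1+ln ε⁻¹)^s + d^t) = 0`. -/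
def ECWeakTract (g : ℕ → ℝ) (s t : ℝ) : Prop :=
  ∀ η : ℝ, 0 < η → ∃ M : ℝ, ∀ (d : ℕ) (ε : ℝ), 1 ≤ d → 0 < ε → ε < 1 →
    M ≤ ε⁻¹ + d →
      Real.log (infoComp g ε d : ℝ) ≤ η * ((1 + Real.log ε⁻¹) ^ s + (d : ℝ) ^ t)

/-!
If `γ_k² → 0` then `ω_k → 0`. For `0 < τ < 1`, keeping exactly the eigenvalues above a
threshold gives `n(ε,d) ≤ M_τ(d)^{1/(1-τ)} ε^{-2τ/(1-τ)}` with
`M_τ(d) = ∑_j λ_d(j)^τ = ∏_{k ≤ d} (1-ω_k)^τ / (1-ω_k^τ)`, and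
`log M_τ(d) ≤ ∑_{k<d} -log (1 - ω_k^τ) = o(d)`; choosing `τ` small yields EC-WT.

Conversely every eigenvalue is at most `∏_k (1-ω_k)`, so `n(ε,d) ≥ (1-ε²) / ∏_k (1-ω_k)`.
If `γ_k² ≥ c > 0` for all `k`, this grows exponentially in `d` at fixed `ε`, which rules out
EC-`(s,1)`-WT for every `s`. EC-WT implies EC-`(s,1)`-WT for `s ≥ 1` by monotonicity.
-/

open Finset Real
open scoped Topology

theorem hasSum_prod_pi_fin {β : Type*} {d : ℕ} {F : Fin d → β → ℝ} {s : Fin d → ℝ}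
    (hF : ∀ k, 0 ≤ F k) (hs : ∀ k, HasSum (F k) (s k)) :
    HasSum (fun j : Fin d → β => ∏ k, F k (j k)) (∏ k, s k) := by
  induction d with
  | zero => simp
  | succ d ih =>
    set G : (Fin d → β) → ℝ := fun j => ∏ k : Fin d, F k.succ (j k)
    have hG : HasSum G (∏ k : Fin d, s k.succ) := ih (fun k => hF k.succ) (fun k => hs k.succ)
    have hG_nonneg : 0 ≤ G := fun j => prod_nonneg fun k _ => hF k.succ (j k)
    have hmul : HasSum (fun p : β × (Fin d → β) => F 0 p.1 * G p.2)
        (s 0 * ∏ k : Fin d, s k.succ) :=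
      (hs 0).mul hG <| (hs 0).summable.mul_of_nonneg hG.summable (hF 0) hG_nonneg
    rw [← (Fin.consEquiv fun _ => β).hasSum_iff, Fin.prod_univ_succ]
    simpa [Function.comp_def, Fin.prod_univ_succ] using hmul

section ThresholdSet

variable {α : Type*} {f : α → ℝ} {τ δ : ℝ}

lemma le_rpow_mul_rpow_of_le {x : ℝ} (hx : 0 ≤ x) (hxδ : x ≤ δ) (hτ1 : τ ≤ 1) :
    x ≤ δ ^ (1 - τ) * x ^ τ := by
  calc x = x ^ (1 - τ) * x ^ τ := by rw [← rpow_add' hx (by norm_num), sub_add_cancel, rpow_one]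
    _ ≤ δ ^ (1 - τ) * x ^ τ := by gcongr

theorem exists_finset_tsum_compl_le_and_card_mul_le (hf : ∀ a, 0 ≤ f a) (hτ0 : 0 ≤ τ)
    (hτ1 : τ ≤ 1) (hsum : Summable fun a => f a ^ τ) (hδ : 0 < δ) :
    ∃ S : Finset α, ∑' a : {a // a ∉ S}, f a ≤ δ ^ (1 - τ) * ∑' a, f a ^ τ ∧
      S.card * δ ^ τ ≤ ∑' a, f a ^ τ := by
  have hfin : {a | δ < f a}.Finite := by
    refine (eventually_cofinite.1 <| hsum.tendsto_cofinite_zero.eventually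
      (gt_mem_nhds (rpow_pos_of_pos hδ τ))).subset fun a ha => ?_
    exact not_lt.2 (rpow_le_rpow hδ.le (le_of_lt ha) hτ0)
  refine ⟨hfin.toFinset, ?_, ?_⟩
  · have hle (a : {a // a ∉ hfin.toFinset}) : f a ≤ δ ^ (1 - τ) * f a ^ τ :=
      le_rpow_mul_rpow_of_le (hf a) (by simpa using a.2) hτ1
    calc ∑' a : {a // a ∉ hfin.toFinset}, f a
        ≤ ∑' a : {a // a ∉ hfin.toFinset}, δ ^ (1 - τ) * f a ^ τ :=
          Summable.tsum_le_tsum hle (.of_nonneg_of_le (fun a => hf a) hle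
            ((hsum.subtype _).mul_left _)) ((hsum.subtype _).mul_left _)
      _ ≤ δ ^ (1 - τ) * ∑' a, f a ^ τ := by
          rw [tsum_mul_left]
          gcongr
          exact hsum.tsum_subtype_le _ _ fun a => rpow_nonneg (hf a) τ
  · calc (hfin.toFinset.card : ℝ) * δ ^ τ ≤ ∑ a ∈ hfin.toFinset, f a ^ τ := by
          rw [← nsmul_eq_mul]
          exact card_nsmul_le_sum _ _ _ fun a ha =>
            rpow_le_rpow hδ.le (by simpa using ha : δ < f a).le hτ0
      _ ≤ ∑' a, f a ^ τ := hsum.sum_le_tsum _ fun a _ => rpow_nonneg (hf a) τ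

theorem one_sub_tsum_compl_le_card_mul (hf : HasSum f 1) {m : ℝ} (hm : ∀ a, f a ≤ m)
    (S : Finset α) : 1 - ∑' a : {a // a ∉ S}, f a ≤ S.card * m := by
  rw [← hf.tsum_eq, ← hf.summable.sum_add_tsum_subtype_compl S, add_sub_cancel_right,
    ← nsmul_eq_mul]
  exact sum_le_card_nsmul _ _ _ fun a _ => hm a

end ThresholdSet

theorem exists_sum_range_le_add_mul {c : ℕ → ℝ} (hc : Tendsto c atTop (𝓝 0)) {η : ℝ}
    (hη : 0 < η) : ∃ C, ∀ d : ℕ, ∑ k ∈ range d, c k ≤ C + η * d := by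
  obtain ⟨K, hK⟩ := eventually_atTop.1 <| hc.eventually (ge_mem_nhds hη)
  -- The excess of `c` over `η` vanishes from `K` on, so it has a finite total `C`.
  have hsum : Summable fun k => max (c k - η) 0 :=
    summable_of_ne_finset_zero (s := range K) fun k hk =>
      max_eq_right (by linarith [hK k (by simpa using hk)])
  refine ⟨∑' k, max (c k - η) 0, fun d => ?_⟩
  calc ∑ k ∈ range d, c k ≤ ∑ k ∈ range d, (max (c k - η) 0 + η) :=
        sum_le_sum fun k _ => by linarith [le_max_left (c k - η) 0]
    _ ≤ ∑' k, max (c k - η) 0 + η * d := by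
        rw [sum_add_distrib, sum_const, card_range, nsmul_eq_mul, mul_comm]
        gcongr
        exact hsum.sum_le_tsum _ fun k _ => le_max_right _ _

lemma le_log_inv_add_of_two_mul_exp_le {A ε x : ℝ} (hε0 : 0 < ε) (hε1 : ε ≤ 1) (hx : 0 ≤ x)
    (h : 2 * exp A ≤ ε⁻¹ + x) : A ≤ log ε⁻¹ + x := by
  have hlog : 0 ≤ log ε⁻¹ := log_nonneg (one_le_inv₀ hε0 |>.2 hε1)
  rcases le_total (exp A) ε⁻¹ with hA | hA
  · linarith [(le_log_iff_exp_le (inv_pos.2 hε0)).2 hA]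
  · linarith [add_one_le_exp A]

lemma omegaOf_eq {x : ℝ} (hx : 0 ≤ x) : omegaOf x = 1 - 2 / (√(1 + 4 * x) + 1) := by
  have hu1 : 1 ≤ √(1 + 4 * x) := Real.one_le_sqrt.2 (by linarith)
  have hu2 : √(1 + 4 * x) ^ 2 = 1 + 4 * x := Real.sq_sqrt (by linarith)
  rw [omegaOf, eq_sub_iff_add_eq, div_add_div _ _ (by positivity) (by positivity),
    div_eq_one_iff_eq (by positivity)]
  nlinarith

lemma omegaOf_pos {x : ℝ} (hx : 0 < x) : 0 < omegaOf x :=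
  div_pos (by linarith) (by positivity)

lemma omegaOf_lt_one {x : ℝ} (hx : 0 ≤ x) : omegaOf x < 1 := by
  rw [omegaOf_eq hx, sub_lt_self_iff]
  positivity

lemma omegaOf_le_self {x : ℝ} (hx : 0 ≤ x) : omegaOf x ≤ x := by
  have : 1 ≤ √(1 + 4 * x) := Real.one_le_sqrt.2 (by linarith)
  rw [omegaOf, div_le_iff₀ (by positivity)]
  nlinarith

lemma omegaOf_le_omegaOf {x y : ℝ} (hx : 0 ≤ x) (hxy : x ≤ y) : omegaOf x ≤ omegaOf y := by
  rw [omegaOf_eq hx, omegaOf_eq (hx.trans hxy)]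
  gcongr

lemma tendsto_neg_log_one_sub_omegaOf_rpow {g : ℕ → ℝ} (hpos : ∀ k, 0 < g k)
    (hg : Tendsto g atTop (𝓝 0)) {τ : ℝ} (hτ : 0 < τ) :
    Tendsto (fun k => -log (1 - omegaOf (g k) ^ τ)) atTop (𝓝 0) := by
  have hω : Tendsto (fun k => omegaOf (g k)) atTop (𝓝 0) :=
    squeeze_zero (fun k => (omegaOf_pos (hpos k)).le) (fun k => omegaOf_le_self (hpos k).le) hg
  have hωτ := hω.rpow_const (Or.inr hτ.le)
  rw [zero_rpow hτ.ne'] at hωτ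
  simpa using ((tendsto_const_nhds (x := (1 : ℝ))).sub hωτ).log (by norm_num) |>.neg

lemma hasSum_eigen_rpow {g : ℕ → ℝ} (hpos : ∀ k, 0 < g k) {τ : ℝ} (hτ : 0 < τ) (d : ℕ) :
    HasSum (fun j => eigen g d j ^ τ)
      (∏ k : Fin d, (1 - omegaOf (g k)) ^ τ / (1 - omegaOf (g k) ^ τ)) := by
  have hω0 k : 0 < omegaOf (g k) := omegaOf_pos (hpos k)
  have hω1 k : 0 < 1 - omegaOf (g k) := sub_pos.2 (omegaOf_lt_one (hpos k).le)
  have heigen j : eigen g d j ^ τ =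
      ∏ k : Fin d, (1 - omegaOf (g k)) ^ τ * (omegaOf (g k) ^ τ) ^ j k := by
    rw [eigen, ← finsetProd_rpow _ _ fun (k : Fin d) _ =>
      mul_nonneg (hω1 k).le (pow_nonneg (hω0 k).le _)]
    refine prod_congr rfl fun k _ => ?_
    rw [mul_rpow (hω1 k).le (pow_nonneg (hω0 k).le _), rpow_pow_comm (hω0 k).le]
  have hωτ k : omegaOf (g k) ^ τ < 1 := rpow_lt_one (hω0 k).le (by linarith [hω1 k]) hτ
  simp only [heigen, div_eq_mul_inv]
  exact hasSum_prod_pi_fin (F := fun k n => (1 - omegaOf (g k)) ^ τ * (omegaOf (g k) ^ τ) ^ n)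
    (fun k n => mul_nonneg (rpow_nonneg (hω1 k).le τ) (pow_nonneg (rpow_nonneg (hω0 k).le τ) n))
    fun k => (hasSum_geometric_of_lt_one (rpow_nonneg (hω0 k).le τ) (hωτ k)).mul_left _

lemma hasSum_eigen {g : ℕ → ℝ} (hpos : ∀ k, 0 < g k) (d : ℕ) : HasSum (eigen g d) 1 := by
  have hω1 k : 1 - omegaOf (g k) ≠ 0 := (sub_pos.2 (omegaOf_lt_one (hpos k).le)).ne'
  simpa [hω1] using hasSum_eigen_rpow hpos one_pos d

lemma log_tsum_eigen_rpow_le {g : ℕ → ℝ} (hpos : ∀ k, 0 < g k) {τ : ℝ} (hτ : 0 < τ) (d : ℕ) :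
    log (∑' j, eigen g d j ^ τ) ≤ ∑ k ∈ range d, -log (1 - omegaOf (g k) ^ τ) := by
  have hω0 k : 0 < omegaOf (g k) := omegaOf_pos (hpos k)
  have hω1 k : 0 < 1 - omegaOf (g k) := sub_pos.2 (omegaOf_lt_one (hpos k).le)
  have hωτ k : 0 < 1 - omegaOf (g k) ^ τ :=
    sub_pos.2 (rpow_lt_one (hω0 k).le (by linarith [hω1 k]) hτ)
  rw [(hasSum_eigen_rpow hpos hτ d).tsum_eq, ← Fin.sum_univ_eq_sum_range,
    log_prod fun (k : Fin d) _ => (div_pos (rpow_pos_of_pos (hω1 k) τ) (hωτ k)).ne']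
  refine sum_le_sum fun k _ => ?_
  rw [log_div (rpow_pos_of_pos (hω1 k) τ).ne' (hωτ k).ne', log_rpow (hω1 k)]
  have : log (1 - omegaOf (g k)) ≤ 0 := log_nonpos (hω1 k).le (by linarith [hω0 k])
  nlinarith

section InformationComplexity

variable {g : ℕ → ℝ} {ε : ℝ} {d : ℕ}

lemma exists_card_le_infoComp (hε : 0 < ε) :
    ∃ S : Finset (Fin d → ℕ), S.card ≤ infoComp g ε d ∧
      ∑' j : {j : Fin d → ℕ // j ∉ S}, eigen g d j.1 ≤ ε ^ 2 := by
  obtain ⟨S, hS⟩ := ((tendsto_order.1 (tendsto_tsum_compl_atTop_zero (eigen g d))).2 (ε ^ 2)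
    (by positivity)).exists
  exact Nat.sInf_mem (s := {n | ∃ S : Finset (Fin d → ℕ), S.card ≤ n ∧
    ∑' j : {j : Fin d → ℕ // j ∉ S}, eigen g d j.1 ≤ ε ^ 2}) ⟨S.card, S, le_rfl, hS.le⟩

lemma infoComp_le_card {S : Finset (Fin d → ℕ)}
    (hS : ∑' j : {j : Fin d → ℕ // j ∉ S}, eigen g d j.1 ≤ ε ^ 2) : infoComp g ε d ≤ S.card :=
  Nat.sInf_le ⟨S, le_rfl, hS⟩

lemma eigen_pos (hpos : ∀ k, 0 < g k) (j : Fin d → ℕ) : 0 < eigen g d j :=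
  prod_pos fun k _ => mul_pos (sub_pos.2 (omegaOf_lt_one (hpos k).le))
    (pow_pos (omegaOf_pos (hpos k)) _)

lemma eigen_le_prod (hpos : ∀ k, 0 < g k) (j : Fin d → ℕ) :
    eigen g d j ≤ ∏ k : Fin d, (1 - omegaOf (g k)) := by
  have hω1 (k : ℕ) : 0 ≤ 1 - omegaOf (g k) := (sub_pos.2 (omegaOf_lt_one (hpos k).le)).le
  exact prod_le_prod (fun k _ => mul_nonneg (hω1 k) (pow_nonneg (omegaOf_pos (hpos k)).le _))
    fun k _ => mul_le_of_le_one_right (hω1 k)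
      (pow_le_one₀ (omegaOf_pos (hpos k)).le (omegaOf_lt_one (hpos k).le).le)

lemma one_sub_sq_le_infoComp_mul (hpos : ∀ k, 0 < g k) (hε : 0 < ε) :
    1 - ε ^ 2 ≤ infoComp g ε d * ∏ k : Fin d, (1 - omegaOf (g k)) := by
  obtain ⟨S, hcard, htail⟩ := exists_card_le_infoComp (g := g) (d := d) hε
  calc 1 - ε ^ 2 ≤ 1 - ∑' j : {j : Fin d → ℕ // j ∉ S}, eigen g d j.1 := by linarith
    _ ≤ S.card * ∏ k : Fin d, (1 - omegaOf (g k)) :=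
      one_sub_tsum_compl_le_card_mul (hasSum_eigen hpos d) (eigen_le_prod hpos) S
    _ ≤ infoComp g ε d * ∏ k : Fin d, (1 - omegaOf (g k)) := by
      gcongr
      · exact prod_nonneg fun k _ => (sub_pos.2 (omegaOf_lt_one (hpos k).le)).le

lemma infoComp_pos (hpos : ∀ k, 0 < g k) (hε0 : 0 < ε) (hε1 : ε < 1) : 0 < infoComp g ε d := by
  have h := one_sub_sq_le_infoComp_mul (d := d) hpos hε0
  by_contra! h0
  rw [Nat.le_zero.1 h0, Nat.cast_zero, zero_mul] at h
  nlinarith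

lemma log_infoComp_le (hpos : ∀ k, 0 < g k) {τ : ℝ} (hτ0 : 0 < τ) (hτ1 : τ < 1)
    (hε0 : 0 < ε) (hε1 : ε < 1) :
    (1 - τ) * log (infoComp g ε d) ≤ log (∑' j, eigen g d j ^ τ) + 2 * τ * log ε⁻¹ := by
  set M := ∑' j, eigen g d j ^ τ
  have hsum := (hasSum_eigen_rpow hpos hτ0 d).summable
  have hM : 0 < M := hsum.tsum_pos (fun j => rpow_nonneg (eigen_pos hpos j).le τ) 0
    (rpow_pos_of_pos (eigen_pos hpos 0) τ)
  -- `exp t` is the threshold for which the tail bound is exactly `ε ^ 2`.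
  obtain ⟨t, ht⟩ : ∃ t, t * (1 - τ) = 2 * log ε - log M :=
    ⟨_, div_mul_cancel₀ _ (by linarith)⟩
  obtain ⟨S, htail, hcard⟩ := exists_finset_tsum_compl_le_and_card_mul_le
    (fun j => (eigen_pos hpos j).le) hτ0.le hτ1.le hsum (exp_pos t)
  have htail' : exp t ^ (1 - τ) * M = ε ^ 2 := by
    rw [← exp_mul, ht, exp_sub, exp_log hM, div_mul_cancel₀ _ hM.ne', mul_comm, exp_mul,
      exp_log hε0, rpow_two]
  have hn : (infoComp g ε d : ℝ) * exp (t * τ) ≤ M := by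
    rw [exp_mul]
    exact le_trans (by gcongr; exact_mod_cast infoComp_le_card (htail.trans_eq htail')) hcard
  have hn0 : (0 : ℝ) < infoComp g ε d := by exact_mod_cast infoComp_pos hpos hε0 hε1
  have hlog : log (infoComp g ε d) + t * τ ≤ log M := by
    rw [← log_exp (t * τ), ← log_mul hn0.ne' (exp_pos _).ne']
    exact log_le_log (by positivity) hn
  rw [log_inv]
  linear_combination mul_le_mul_of_nonneg_left hlog (sub_nonneg.2 hτ1.le) - τ * ht

end InformationComplexity

theorem ECWeakTract.mono {g : ℕ → ℝ} {s s' t t' : ℝ} (h : ECWeakTract g s t) (hs : s ≤ s')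
    (ht : t ≤ t') : ECWeakTract g s' t' := by
  intro η hη
  obtain ⟨M, hM⟩ := h η hη
  refine ⟨M, fun d ε hd hε0 hε1 hMd => (hM d ε hd hε0 hε1 hMd).trans ?_⟩
  have hε : 1 ≤ 1 + log ε⁻¹ := by linarith [log_nonneg (one_le_inv₀ hε0 |>.2 hε1.le)]
  exact mul_le_mul_of_nonneg_left (add_le_add (rpow_le_rpow_of_exponent_le hε hs)
    (rpow_le_rpow_of_exponent_le (by exact_mod_cast hd) ht)) hη.le

theorem ecWeakTract_one_one_of_forall_exists_le {g : ℕ → ℝ}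
    (h : ∀ η > 0, ∃ C, ∀ (d : ℕ) (ε : ℝ), 0 < ε → ε < 1 →
      log (infoComp g ε d) ≤ C + η * (log ε⁻¹ + d)) :
    ECWeakTract g 1 1 := by
  intro η hη
  obtain ⟨C, hC⟩ := h (η / 2) (half_pos hη)
  refine ⟨2 * exp (2 * C / η), fun d ε _ hε0 hε1 hM => ?_⟩
  have hCη : 2 * C / η ≤ log ε⁻¹ + d :=
    le_log_inv_add_of_two_mul_exp_le hε0 hε1.le d.cast_nonneg hM
  rw [div_le_iff₀ hη] at hCη
  rw [rpow_one, rpow_one]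
  linarith [hC d ε hε0 hε1]

lemma exists_log_infoComp_le {g : ℕ → ℝ} (hpos : ∀ k, 0 < g k) (hg : Tendsto g atTop (𝓝 0))
    {η : ℝ} (hη : 0 < η) :
    ∃ C, ∀ (d : ℕ) (ε : ℝ), 0 < ε → ε < 1 → log (infoComp g ε d) ≤ C + η * (log ε⁻¹ + d) := by
  set τ := min (1 / 2) (η / 4)
  have hτ0 : 0 < τ := lt_min (by norm_num) (by linarith)
  have hτ1 : τ ≤ 1 / 2 := min_le_left _ _
  have hτη : τ ≤ η / 4 := min_le_right _ _
  obtain ⟨C, hC⟩ := exists_sum_range_le_add_mul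
    (tendsto_neg_log_one_sub_omegaOf_rpow hpos hg hτ0) (half_pos hη)
  refine ⟨2 * C, fun d ε hε0 hε1 => ?_⟩
  have hn := log_natCast_nonneg (infoComp g ε d)
  have hε : 0 ≤ log ε⁻¹ := log_nonneg (one_le_inv₀ hε0 |>.2 hε1.le)
  have h1 := log_infoComp_le (d := d) hpos hτ0 (by linarith) hε0 hε1
  have h2 := (log_tsum_eigen_rpow_le hpos hτ0 d).trans (hC d)
  nlinarith

lemma one_sub_sq_le_infoComp_mul_pow {g : ℕ → ℝ} (hpos : ∀ k, 0 < g k) {c : ℝ} (hc : 0 < c)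
    (hcg : ∀ k, c ≤ g k) {ε : ℝ} (hε : 0 < ε) (d : ℕ) :
    1 - ε ^ 2 ≤ infoComp g ε d * (1 - omegaOf c) ^ d := by
  refine (one_sub_sq_le_infoComp_mul hpos hε).trans (mul_le_mul_of_nonneg_left ?_ (by positivity))
  rw [← Fin.prod_const]
  exact prod_le_prod (fun k _ => (sub_pos.2 (omegaOf_lt_one (hpos k).le)).le) fun k _ =>
    sub_le_sub_left (omegaOf_le_omegaOf hc.le (hcg k)) 1

theorem not_ecWeakTract_of_le {g : ℕ → ℝ} (hpos : ∀ k, 0 < g k) {c : ℝ} (hc : 0 < c)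
    (hcg : ∀ k, c ≤ g k) (s : ℝ) : ¬ ECWeakTract g s 1 := by
  intro h
  set a := -log (1 - omegaOf c)
  have hω : 0 < 1 - omegaOf c := sub_pos.2 (omegaOf_lt_one hc.le)
  have ha : 0 < a := neg_pos.2 (log_neg hω (by linarith [omegaOf_pos hc]))
  have hlower (d : ℕ) : log (3 / 4) + a * d ≤ log (infoComp g (1 / 2) d) := by
    have h34 := one_sub_sq_le_infoComp_mul_pow hpos hc hcg (ε := 1 / 2) (by norm_num) d
    have hn : (0 : ℝ) < infoComp g (1 / 2) d := by
      exact_mod_cast infoComp_pos hpos (by norm_num) (by norm_num)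
    have := log_le_log (by norm_num) (h34.trans' (by norm_num : (3 / 4 : ℝ) ≤ 1 - (1 / 2) ^ 2))
    rw [log_mul hn.ne' (pow_pos hω d).ne', log_pow] at this
    linarith
  obtain ⟨M, hM⟩ := h (a / 2) (half_pos ha)
  obtain ⟨d, hd1, hdM, hdB⟩ := ((eventually_ge_atTop 1).and
    ((tendsto_natCast_atTop_atTop.eventually_ge_atTop M).and
      ((tendsto_natCast_atTop_atTop.const_mul_atTop (half_pos ha)).eventually_gt_atTop
        (a / 2 * (1 + log (1 / 2 : ℝ)⁻¹) ^ s - log (3 / 4))))).exists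
  have hupper := hM d (1 / 2) hd1 (by norm_num) (by norm_num) (by norm_num; linarith)
  rw [rpow_one] at hupper
  linarith [hlower d]

theorem tendsto_zero_of_ecWeakTract {g : ℕ → ℝ} (hpos : ∀ k, 0 < g k) (hanti : Antitone g)
    {s : ℝ} (h : ECWeakTract g s 1) : Tendsto g atTop (𝓝 0) := by
  have hbdd : BddBelow (Set.range g) := ⟨0, by rintro _ ⟨k, rfl⟩; exact (hpos k).le⟩
  have hlim := tendsto_atTop_ciInf hanti hbdd
  rcases (le_ciInf fun k => (hpos k).le).eq_or_lt with h0 | hinf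
  · rwa [← h0] at hlim
  · exact absurd h (not_ecWeakTract_of_le hpos hinf (ciInf_le hbdd) s)

/-- For every `s ≥ 1`: EC-`(s,1)`-WT ⟺ EC-WT ⟺ `lim_j γ_j² = 0`. -/
theorem stmt7 (s : ℝ) (hs : 1 ≤ s)
    (g : ℕ → ℝ) (hpos : ∀ j, 0 < g j) (hanti : Antitone g) :
    (ECWeakTract g s 1 ↔ ECWeakTract g 1 1) ∧
    (ECWeakTract g 1 1 ↔ Filter.Tendsto g Filter.atTop (nhds 0)) := by
  have hWT : Tendsto g atTop (𝓝 0) → ECWeakTract g 1 1 := fun hg =>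
    ecWeakTract_one_one_of_forall_exists_le fun _ hη => exists_log_infoComp_le hpos hg hη
  exact ⟨⟨fun h => hWT (tendsto_zero_of_ecWeakTract hpos hanti h), fun h => h.mono hs le_rfl⟩,
    ⟨tendsto_zero_of_ecWeakTract hpos hanti, hWT⟩⟩
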